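/- arXiv:2003.09028 — 6 statements merged into one kernel-verified Lean document; each statement's English description precedes it below -/
import Mathlib

section
/- Let p be an odd prime and d a positive integer not divisible by p. Define τ_{i,j} = i·d - (1 - 1/p)·d·j as a rational number, and for 0 ≤ j ≤ p-1 define L_j(d) = Σ_{i=j}^{p-1} ( ⌊i·d/p⌋ - ⌊τ_{i,j}/p⌋ ). Then for (p+1)/2 ≤ j ≤ p-2, one has L_j(d) ≥ L_{j+1}(d). -/
/-- `L_j(d)` from Booher–Cais, for a `ℤ/pℤ`-cover with a single ramification invariant `d`. -/
def Lj (p d j : ℕ) : ℤ :=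
  ∑ i ∈ Finset.Icc j (p - 1),
    (⌊((i : ℚ) * d) / p⌋ - ⌊((i : ℚ) * d) / p - (1 - 1 / (p : ℚ)) * ((j : ℚ) * d) / p⌋)

/-!
Shifting both indices of `τ` by one adds `d / p ≥ 0`, so pairing the term `i` of the `(j+1)`-sum
with the term `i - 1` of the `j`-sum, `L_j - L_{j+1}` is a sum of nonnegative floor differences
plus the boundary term `⌊j d / p⌋ - ⌊τ_{p-1,j} / p⌋`. The latter is nonnegative as soon as
`p ≤ 2 j ≤ 2 p`, since `p (j d - τ_{p-1,j}) = d (p (2 j - p) + (p - j))`.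
-/

open Finset

def tau (p d i j : ℕ) : ℚ := i * d - (1 - 1 / (p : ℚ)) * (j * d)

lemma Lj_eq_sum_tau (p d j : ℕ) :
    Lj p d j = ∑ i ∈ Icc j (p - 1), (⌊(i * d : ℚ) / p⌋ - ⌊tau p d i j / p⌋) := by
  simp only [Lj, tau, sub_div]

lemma tau_add_one_add_one (p d i j : ℕ) : tau p d (i + 1) (j + 1) = tau p d i j + d / p := by
  simp only [tau]
  push_cast
  ring

lemma tau_le_tau_add_one_add_one (p d i j : ℕ) : tau p d i j ≤ tau p d (i + 1) (j + 1) := by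
  rw [tau_add_one_add_one]
  exact le_add_of_nonneg_right (by positivity)

lemma tau_sub_one_le (p d j : ℕ) (hp : 0 < p) (hjp : j ≤ p) (hpj : p ≤ 2 * j) :
    tau p d (p - 1) j ≤ j * d := by
  have hpq : (0 : ℚ) < p := by exact_mod_cast hp
  have hjp' : (j : ℚ) ≤ p := by exact_mod_cast hjp
  have hpj' : (p : ℚ) ≤ 2 * j := by exact_mod_cast hpj
  have key : j * d - tau p d (p - 1) j = d * (p * (2 * j - p) + (p - j)) / p := by
    rw [tau, Nat.cast_sub hp]
    field_simp
    ring
  have : 0 ≤ (d : ℚ) * (p * (2 * j - p) + (p - j)) / p := by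
    apply div_nonneg _ hpq.le
    apply mul_nonneg d.cast_nonneg
    nlinarith
  linarith

lemma sum_Icc_sub_sum_Icc_add_one {M : Type*} [AddCommGroup M] (F G H : ℕ → M) {j n : ℕ}
    (hjn : j < n) :
    ∑ i ∈ Icc j n, (F i - G i) - ∑ i ∈ Icc (j + 1) n, (F i - H i) =
      (F j - G n) + ∑ i ∈ Ico j n, (H (i + 1) - G i) := by
  simp only [sum_sub_distrib, ← Ico_add_one_right_eq_Icc]
  rw [sum_eq_sum_Ico_succ_bot (by omega : j < n + 1) F, sum_Ico_succ_top hjn.le G,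
    ← sum_Ico_add' H j n 1]
  abel

theorem Lj_decreasing_general (p d j : ℕ) (hp : p.Prime) (hj1 : (p + 1) / 2 ≤ j) (hj2 : j ≤ p - 2) :
    Lj p d (j + 1) ≤ Lj p d j := by
  have hp0 : 0 < p := hp.pos
  rw [← sub_nonneg, Lj_eq_sum_tau, Lj_eq_sum_tau,
    sum_Icc_sub_sum_Icc_add_one _ _ (fun i ↦ ⌊tau p d i (j + 1) / p⌋) (by omega : j < p - 1)]
  refine add_nonneg (sub_nonneg.2 ?_) (sum_nonneg fun i _ ↦ sub_nonneg.2 ?_)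
  · exact Int.floor_le_floor
      (div_le_div_of_nonneg_right (tau_sub_one_le p d j hp0 (by omega) (by omega)) (by positivity))
  · exact Int.floor_le_floor
      (div_le_div_of_nonneg_right (tau_le_tau_add_one_add_one ..) (by positivity))

theorem Lj_decreasing (p d j : ℕ) (hp : p.Prime) (hodd : Odd p) (hd : 0 < d)
    (hpd : ¬ p ∣ d) (hj1 : (p + 1) / 2 ≤ j) (hj2 : j ≤ p - 2) :
    Lj p d (j + 1) ≤ Lj p d j :=
  Lj_decreasing_general p d j hp hj1 hj2
end

section
/- Let p be a prime and d a positive integer not divisible by p. For 0 ≤ j ≤ p-1 define L_j(d) = Σ_{i=j}^{p-1} ( ⌊i·d/p⌋ - ⌊i·d/p - (1 - 1/p)·j·d/p⌋ ). Then L_j(d) = L_{p-j}(d) for all 1 ≤ j ≤ p-1. -/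
namespace Int

theorem mul_sub_one_sub_ediv {p : ℤ} (hp : 0 < p) (d x : ℤ) :
    (p * d - 1 - x) / p = d - 1 - x / p := by
  rw [Int.ediv_eq_iff_of_pos hp]
  have := Int.mul_ediv_add_emod x p
  constructor <;> nlinarith [Int.emod_nonneg x hp.ne', Int.emod_lt_of_pos x hp]

theorem sub_one_ediv_of_not_dvd {p y : ℤ} (hp : 0 < p) (h : ¬ p ∣ y) :
    (y - 1) / p = y / p := by
  rw [Int.ediv_eq_iff_of_pos hp]
  have := Int.mul_ediv_add_emod y p
  have : 0 < y % p := (Int.emod_nonneg y hp.ne').lt_of_ne' fun h0 => h (Int.dvd_of_emod_eq_zero h0)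
  constructor <;> nlinarith [Int.emod_lt_of_pos y hp]

theorem mul_sub_ediv_of_not_dvd {p y : ℤ} (hp : 0 < p) (d : ℤ) (h : ¬ p ∣ y) :
    (p * d - y) / p = d - 1 - y / p := by
  rw [show p * d - y = p * d - 1 - (y - 1) by ring, mul_sub_one_sub_ediv hp,
    sub_one_ediv_of_not_dvd hp h]

theorem natCast_not_dvd_mul_of_lt {p d i : ℕ} (hp : p.Prime) (hpd : ¬ p ∣ d) (hi : 0 < i)
    (hip : i < p) : ¬ (p : ℤ) ∣ i * d := by
  rw [← Nat.cast_mul, Int.natCast_dvd_natCast]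
  exact fun h => (hp.dvd_mul.mp h).elim (fun h' => absurd (Nat.le_of_dvd hi h') (by omega)) hpd

end Int

theorem floor_div_sub_one_sub_inv_mul_div (a b : ℤ) {p : ℕ} (hp : 0 < p) :
    ⌊(a : ℚ) / p - (1 - 1 / (p : ℚ)) * b / p⌋ = (a - b + b / p) / p := by
  have hp' : (p : ℚ) ≠ 0 := by positivity
  have : (a : ℚ) / p - (1 - 1 / (p : ℚ)) * b / p = ((a - b : ℤ) + (b : ℚ) / p) / p := by
    field_simp
    push_cast
    ring
  rw [this, Int.floor_div_natCast, Int.floor_intCast_add, Rat.floor_intCast_div_natCast]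

def floorSum (p : ℕ) (d a : ℤ) (n : ℕ) : ℤ :=
  ∑ k ∈ Finset.range n, (k * d + a) / p

section floorSum

variable {p : ℕ} {d : ℤ}

theorem floorSum_add (a : ℤ) (m n : ℕ) :
    floorSum p d a (m + n) = floorSum p d a m + floorSum p d (a + m * d) n := by
  simp only [floorSum, Finset.sum_range_add]
  congr 1
  refine Finset.sum_congr rfl fun k _ => ?_
  push_cast
  ring_nf

theorem floorSum_add_step (a : ℤ) (n : ℕ) :
    floorSum p d (a + d) n = floorSum p d a n + (a + n * d) / p - a / p := by
  have h := floorSum_add (p := p) (d := d) a 1 n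
  rw [add_comm 1 n, floorSum_add] at h
  simp only [floorSum, Finset.sum_range_one, Nat.cast_zero, zero_mul, zero_add, Nat.cast_one,
    one_mul] at h ⊢
  linear_combination -h

theorem floorSum_add_modulus (hp : 0 < p) (a : ℤ) (n : ℕ) :
    floorSum p d (a + p) n = floorSum p d a n + n := by
  simp only [floorSum, ← add_assoc, Int.add_ediv_of_dvd_right (dvd_refl (p : ℤ)),
    Int.ediv_self (by exact_mod_cast hp.ne' : (p : ℤ) ≠ 0), Finset.sum_add_distrib]
  simp

theorem floorSum_reflect (hp : 0 < p) {a b : ℤ} (n : ℕ)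
    (hab : a + b = p * d - 1 - (n - 1) * d) :
    floorSum p d a n + floorSum p d b n = n * (d - 1) := by
  rw [floorSum, ← Finset.sum_range_reflect, floorSum, ← Finset.sum_add_distrib,
    Finset.sum_congr rfl (g := fun _ => d - 1)]
  · simp [mul_sub]
  intro k hk
  have hk : k < n := Finset.mem_range.mp hk
  rw [show ((n - 1 - k : ℕ) : ℤ) * d + a = p * d - 1 - (k * d + b) by
    push_cast [Nat.cast_sub (by omega : 1 ≤ n), Nat.cast_sub (by omega : k ≤ n - 1)]
    linear_combination hab]
  rw [Int.mul_sub_one_sub_ediv (by exact_mod_cast hp)]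
  ring

theorem floorSum_sub_one (hp : 0 < p) {a : ℤ} {n : ℕ} (h : ∀ k < n, ¬ (p : ℤ) ∣ k * d + a) :
    floorSum p d (a - 1) n = floorSum p d a n := by
  refine Finset.sum_congr rfl fun k hk => ?_
  rw [← add_sub_assoc,
    Int.sub_one_ediv_of_not_dvd (by exact_mod_cast hp) (h k (Finset.mem_range.mp hk))]

theorem floorSum_period (hp : 0 < p) (hdp : IsCoprime d p) (a : ℤ) :
    floorSum p d a p = floorSum p d 0 p + a := by
  set G : ℤ → ℤ := fun a => floorSum p d a p - a
  have hGd : Function.Periodic G d := fun a => by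
    simp only [G, floorSum_add_step,
      Int.add_mul_ediv_left _ _ (by exact_mod_cast hp.ne' : (p : ℤ) ≠ 0)]
    ring
  have hGp : Function.Periodic G p := fun a => by
    simp only [G, floorSum_add_modulus hp]
    ring
  obtain ⟨u, v, huv⟩ := hdp
  have hG1 : Function.Periodic G 1 := huv ▸ (hGd.int_mul u).add_period (hGp.int_mul v)
  have := hG1.int_mul_eq a
  simp only [G, mul_one, Int.cast_id] at this
  linarith

end floorSum

theorem Lj_eq_floorSum_sub {p : ℕ} (hp : 0 < p) (d j : ℕ) :
    Lj p d j = floorSum p d (j * d) (p - j) - floorSum p d (j * d / p) (p - j) := by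
  rw [Lj, Finset.Icc_sub_one_right_eq_Ico_of_not_isMin (by simpa using hp.ne'),
    Finset.sum_Ico_eq_sum_range, floorSum, floorSum, ← Finset.sum_sub_distrib]
  refine Finset.sum_congr rfl fun k _ => ?_
  have h1 := Rat.floor_intCast_div_natCast (((j + k : ℕ) : ℤ) * d) p
  have h2 := floor_div_sub_one_sub_inv_mul_div (((j + k : ℕ) : ℤ) * d) (j * d) hp
  push_cast at h1 h2 ⊢
  rw [h1, h2]
  ring_nf

theorem Lj_symmetry_general (p d j : ℕ) (hp : p.Prime) (hpd : ¬ p ∣ d)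
    (hj1 : 1 ≤ j) (hj2 : j ≤ p - 1) :
    Lj p d j = Lj p d (p - j) := by
  have hp0 := hp.pos
  have hjp : j ≤ p := by omega
  rw [Lj_eq_floorSum_sub hp0, Lj_eq_floorSum_sub hp0, Nat.sub_sub_self hjp]
  set q : ℤ := j * d / p
  have hq : ((p - j : ℕ) : ℤ) * d / p = d - 1 - q := by
    rw [Nat.cast_sub hjp, sub_mul, Int.mul_sub_ediv_of_not_dvd (by exact_mod_cast hp0) _
      (Int.natCast_not_dvd_mul_of_lt hp hpd (by omega) (by omega))]
  rw [hq]
  have hsplit0 : floorSum p d 0 p = floorSum p d 0 j + floorSum p d (j * d) (p - j) := by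
    simpa [Nat.add_sub_cancel' hjp] using floorSum_add (p := p) (d := d) 0 j (p - j)
  have hsplitq :
      floorSum p d q p = floorSum p d q (p - j) + floorSum p d (q + (p - j : ℕ) * d) j := by
    simpa [Nat.sub_add_cancel hjp] using floorSum_add (p := p) (d := d) q (p - j) j
  have hrefl0 : floorSum p d ((p - j : ℕ) * d) j + floorSum p d (d - 1) j = j * (d - 1) :=
    floorSum_reflect hp0 j (by push_cast [hjp]; ring)
  have hreflq : floorSum p d (d - 1 - q) j + floorSum p d (q + (p - j : ℕ) * d) j = j * (d - 1) :=
    floorSum_reflect hp0 j (by push_cast [hjp]; ring)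
  have hsub : floorSum p d (d - 1) j = floorSum p d d j := floorSum_sub_one hp0 fun k hk => by
    simpa [add_one_mul] using Int.natCast_not_dvd_mul_of_lt hp hpd (i := k + 1) (by omega) (by omega)
  have hshift : floorSum p d d j = floorSum p d 0 j + q := by
    simpa using floorSum_add_step (p := p) (d := d) 0 j
  have hper : floorSum p d q p = floorSum p d 0 p + q :=
    floorSum_period hp0 (Nat.isCoprime_iff_coprime.mpr (hp.coprime_iff_not_dvd.mpr hpd).symm) q
  linear_combination -hsplit0 + hsplitq - hrefl0 + hreflq + hsub - hper + hshift

theorem Lj_symmetry (p d j : ℕ) (hp : p.Prime) (hd : 0 < d) (hpd : ¬ p ∣ d)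
    (hj1 : 1 ≤ j) (hj2 : j ≤ p - 1) :
    Lj p d j = Lj p d (p - j) :=
  Lj_symmetry_general p d j hp hpd hj1 hj2
end

section
/- Let p be an odd prime and d a positive integer not divisible by p. With L_j(d) = Σ_{i=j}^{p-1} ( ⌊i·d/p⌋ - ⌊i·d/p - (1 - 1/p)·j·d/p⌋ ), the maximum of L_j(d) over 1 ≤ j ≤ p-1 is attained at j = (p-1)/2; that is, max_{1 ≤ j ≤ p-1} L_j(d) = L_{(p-1)/2}(d). -/
open Finset

theorem Nat.sum_range_mul_add_mod {a n : ℕ} (ha : a.Coprime n) (b : ℕ) :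
    ∑ k ∈ range n, (k * a + b) % n = ∑ k ∈ range n, k := by
  rcases n.eq_zero_or_pos with rfl | hn
  · simp
  let e : Fin n → Fin n := fun k => ⟨(k * a + b) % n, Nat.mod_lt _ hn⟩
  have he : e.Injective := fun k l hkl =>
    Fin.ext <| Nat.ModEq.eq_of_lt_of_lt
      ((Nat.ModEq.add_right_cancel' b (Fin.val_eq_of_eq hkl)).cancel_right_of_coprime
        (Nat.coprime_comm.mp ha)) k.2 l.2
  rw [← Fin.sum_univ_eq_sum_range (fun k => (k * a + b) % n),
    ← Fin.sum_univ_eq_sum_range (fun k => k)]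
  exact Fintype.sum_bijective e (Finite.injective_iff_bijective.mp he) _ _ fun _ => rfl

theorem Nat.two_mul_sum_range_mul_add_ediv {a n : ℕ} (hn : 0 < n) (ha : a.Coprime n) (b : ℕ) :
    2 * ∑ k ∈ range n, ((k * a + b) / n : ℤ) = (n - 1) * (a - 1) + 2 * b := by
  have hdiv : ∀ k ∈ range n, (n : ℤ) * ((k * a + b) / n) = k * a + b - (k * a + b) % n :=
    fun k _ => by linarith [Int.mul_ediv_add_emod ((k : ℤ) * a + b) n]
  have hmod : ∑ k ∈ range n, ((k * a + b) % n : ℤ) = ∑ k ∈ range n, (k : ℤ) := by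
    have h := congrArg (Nat.cast : ℕ → ℤ) (Nat.sum_range_mul_add_mod ha b)
    push_cast at h
    exact h
  have hgauss : 2 * ∑ k ∈ range n, (k : ℤ) = n * (n - 1) := by
    have h := congrArg (Nat.cast : ℕ → ℤ) (Finset.sum_range_id_mul_two n)
    push_cast [Nat.cast_sub hn] at h
    linarith
  apply mul_left_cancel₀ (show (n : ℤ) ≠ 0 by positivity)
  rw [mul_left_comm, mul_sum, sum_congr rfl hdiv, sum_sub_distrib, hmod, sum_add_distrib,
    ← sum_mul, sum_const, card_range, nsmul_eq_mul]
  linear_combination (a - 1 : ℤ) * hgauss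

theorem Int.mul_ediv_add_sub_mul_ediv {p q n d : ℤ} (hq : 0 < q) (hpq : p ∣ q)
    (hpd : IsCoprime p d) (hn : ¬ p ∣ n) : n * d / q + (q - n) * d / q = d - 1 := by
  have hnd : ¬ q ∣ n * d := fun h => hn (hpd.dvd_of_dvd_mul_right (hpq.trans h))
  rw [sub_mul, sub_eq_add_neg, Int.mul_add_ediv_left _ _ hq.ne', Int.neg_ediv, if_neg hnd,
    Int.sign_eq_one_of_pos hq]
  ring

theorem Finset.sum_range_reflect_tail {M : Type*} [AddCommMonoid M] (f : ℕ → M) {j n : ℕ}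
    (hjn : j ≤ n) : ∑ k ∈ range j, f (n - j + k) = ∑ k ∈ range j, f (n - 1 - k) := by
  rw [← sum_range_reflect]
  exact sum_congr rfl fun k hk => congrArg f (by rw [mem_range] at hk; omega)

theorem Lj_eq_sum_range {p : ℕ} (hp : 0 < p) (d j : ℕ) :
    Lj p d j = ∑ k ∈ range (p - j),
      (((j + k : ℕ) : ℤ) * d / p - ((k * p + j) * d : ℤ) / p ^ 2) := by
  have hIcc : Icc j (p - 1) = Ico j p := by ext; simp; omega
  rw [Lj, hIcc, sum_Ico_eq_sum_range]
  refine sum_congr rfl fun k _ => ?_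
  have hp' : (p : ℚ) ≠ 0 := by positivity
  have h1 : ((j + k : ℕ) : ℚ) * d / p = (((j + k : ℕ) * d : ℤ) : ℚ) / (p : ℕ) := by
    push_cast; ring
  have h2 : ((j + k : ℕ) : ℚ) * d / p - (1 - 1 / (p : ℚ)) * (j * d) / p
      = (((k * p + j) * d : ℤ) : ℚ) / (p ^ 2 : ℕ) := by
    push_cast; field_simp; ring
  rw [h2, h1, Rat.floor_intCast_div_natCast, Rat.floor_intCast_div_natCast]
  push_cast
  ring

def LjShort (p d j : ℕ) : ℤ :=
  ∑ k ∈ range j, ((d : ℤ) - 1 - (k + 1) * d / p - ((k + 1) * p - j) * d / p ^ 2)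

section
variable {p d j : ℕ}

theorem two_mul_sum_range_mul_add_ediv_sq (hpd : p.Coprime d) (hp : 0 < p) (j : ℕ) :
    2 * ∑ k ∈ range p, ((k * p + j) * d : ℤ) / p ^ 2
      = (p - 1) * (d - 1) + 2 * (j * d / p) := by
  have hk (k : ℕ) : ((k * p + j) * d : ℤ) / p ^ 2 = (k * d + (j * d / p : ℕ)) / p := by
    rw [sq, ← Int.ediv_ediv_of_nonneg (by positivity),
      show ((k * p + j) * d : ℤ) = p * (k * d) + j * d by ring,
      Int.mul_add_ediv_left _ _ (by positivity)]
    push_cast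
    rfl
  simp_rw [hk]
  rw [Nat.two_mul_sum_range_mul_add_ediv hp hpd.symm]
  push_cast
  rfl

theorem sum_range_tail_ediv_sq (hpd : p.Coprime d) (hjp : j < p) :
    ∑ k ∈ range j, (((p - j + k : ℕ) * p + j) * d : ℤ) / p ^ 2
      = ∑ k ∈ range j, ((d : ℤ) - 1 - ((k + 1) * p - j) * d / p ^ 2) := by
  rw [sum_range_reflect_tail (fun i : ℕ => ((i * p + j) * d : ℤ) / p ^ 2) hjp.le]
  refine sum_congr rfl fun k hk => ?_
  rw [mem_range] at hk
  have hj : ¬ (p : ℤ) ∣ j := by exact_mod_cast Nat.not_dvd_of_pos_of_lt (by omega) hjp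
  have hpair := Int.mul_ediv_add_sub_mul_ediv (q := (p : ℤ) ^ 2) (pow_pos (by omega) 2)
    (dvd_pow_self _ two_ne_zero) (Nat.isCoprime_iff_coprime.mpr hpd)
    (n := (k + 1) * p - j) fun h => hj ((dvd_sub_right (dvd_mul_left _ _)).mp h)
  rw [show (p : ℤ) ^ 2 - ((k + 1) * p - j) = (p - (k + 1)) * p + j by ring] at hpair
  rw [show ((p - 1 - k : ℕ) : ℤ) = p - (k + 1) by omega]
  linarith

theorem Lj_sub_eq_LjShort (hpd : p.Coprime d) (hjp : j < p) :
    Lj p d (p - j) = LjShort p d j := by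
  rw [Lj_eq_sum_range (by omega), Nat.sub_sub_self hjp.le, sum_sub_distrib,
    sum_range_reflect_tail (fun i : ℕ => (i : ℤ) * d / p) hjp.le, LjShort, ← sum_sub_distrib]
  refine sum_congr rfl fun k hk => ?_
  rw [mem_range] at hk
  have hk1 : ¬ (p : ℤ) ∣ (k + 1 : ℕ) := by
    exact_mod_cast Nat.not_dvd_of_pos_of_lt k.succ_pos (by omega)
  have hpair := Int.mul_ediv_add_sub_mul_ediv (by omega) dvd_rfl
    (Nat.isCoprime_iff_coprime.mpr hpd) hk1
  have hcast : ((p - 1 - k : ℕ) : ℤ) = p - (k + 1) := by omega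
  have harg : (k * p + (p - j : ℕ) : ℤ) = (k + 1) * p - j := by push_cast [hjp.le]; ring
  push_cast at hpair
  rw [hcast, harg]
  linarith

theorem Lj_eq_LjShort (hpd : p.Coprime d) (hjp : j < p) : Lj p d j = LjShort p d j := by
  have hp : 0 < p := by omega
  have hfull_f := Nat.two_mul_sum_range_mul_add_ediv hp hpd.symm 0
  have hfull_g := two_mul_sum_range_mul_add_ediv_sq hpd hp j
  have hsplit_f := sum_range_add (fun i : ℕ => (i : ℤ) * d / p) j (p - j)
  have hsplit_g := sum_range_add (fun k : ℕ => ((k * p + j) * d : ℤ) / p ^ 2) (p - j) j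
  have hhead := sum_range_succ' (fun i : ℕ => (i : ℤ) * d / p) j
  rw [Nat.add_sub_cancel' hjp.le] at hsplit_f
  rw [Nat.sub_add_cancel hjp.le, sum_range_tail_ediv_sq hpd hjp] at hsplit_g
  rw [sum_range_succ] at hhead
  have hshort : LjShort p d j = ∑ k ∈ range j, ((d : ℤ) - 1 - ((k + 1) * p - j) * d / p ^ 2)
      - ∑ k ∈ range j, ((k + 1 : ℕ) : ℤ) * d / p := by
    rw [LjShort, ← sum_sub_distrib]
    exact sum_congr rfl fun k _ => by push_cast; ring
  simp only [Nat.cast_zero, add_zero, mul_zero, zero_mul, Int.zero_ediv] at hfull_f hhead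
  rw [Lj_eq_sum_range hp, sum_sub_distrib, hshort]
  linarith

theorem mul_ediv_add_mul_sub_ediv_sq_le_sub_one (hd : 0 < d) (hm : 2 * j < p) :
    (j * d : ℤ) / p + ((j * p - j) * d : ℤ) / p ^ 2 ≤ d - 1 := by
  have hp : (0 : ℤ) < p := by omega
  rw [← Int.mul_ediv_mul_of_pos_left _ _ hp, ← sq, Int.le_sub_one_iff]
  refine (Int.ediv_add_ediv_le_add_ediv (by positivity)).trans_lt ?_
  rw [Int.ediv_lt_iff_lt_mul (by positivity)]
  have hm' : (2 * j : ℤ) ≤ p - 1 := by omega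
  have hd' : (0 : ℤ) < d := by omega
  nlinarith [mul_le_mul_of_nonneg_right hm' (by omega : (0 : ℤ) ≤ 2 * p - 1)]

theorem LjShort_le_succ (hd : 0 < d) (hj : 2 * (j + 1) < p) :
    LjShort p d j ≤ LjShort p d (j + 1) := by
  have hp : (0 : ℤ) < p := by omega
  rw [LjShort, LjShort, sum_range_succ]
  push_cast
  have hterm : ∀ k ∈ range j, ((d : ℤ) - 1 - (k + 1) * d / p - ((k + 1) * p - j) * d / p ^ 2)
      ≤ (d : ℤ) - 1 - (k + 1) * d / p - ((k + 1) * p - (j + 1)) * d / p ^ 2 := fun k _ => by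
    have : ((k + 1) * p - (j + 1) : ℤ) * d / p ^ 2 ≤ ((k + 1) * p - j : ℤ) * d / p ^ 2 :=
      Int.ediv_le_ediv (by positivity) (by nlinarith)
    linarith
  have hlast := mul_ediv_add_mul_sub_ediv_sq_le_sub_one hd hj
  push_cast at hlast
  linarith [sum_le_sum hterm]

theorem LjShort_le_of_le (hd : 0 < d) {i : ℕ} (hij : i ≤ j) (hj : 2 * j < p) :
    LjShort p d i ≤ LjShort p d j := by
  induction j, hij using Nat.le_induction with
  | base => rfl
  | succ j _ ih => exact (ih (by omega)).trans (LjShort_le_succ hd hj)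
end

theorem Lj_max_at_half (p d : ℕ) (hp : p.Prime) (hodd : Odd p)
    (hpd : ¬ p ∣ d) :
    (Finset.Icc 1 (p - 1)).sup' (Finset.nonempty_Icc.mpr (by have := hp.two_le; omega))
      (fun j => Lj p d j) = Lj p d ((p - 1) / 2) := by
  have hcop : p.Coprime d := (Nat.Prime.coprime_iff_not_dvd hp).mpr hpd
  have hd : 0 < d := Nat.pos_of_ne_zero fun h => hpd (h ▸ dvd_zero p)
  have hp2 := hp.two_le
  obtain ⟨m, rfl⟩ := hodd
  rw [show (2 * m + 1 - 1) / 2 = m by omega]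
  refine le_antisymm (sup'_le _ _ fun j hj => ?_) (le_sup' _ (mem_Icc.mpr ⟨by omega, by omega⟩))
  rw [mem_Icc] at hj
  have hfold : Lj (2 * m + 1) d j = LjShort (2 * m + 1) d (min j (2 * m + 1 - j)) := by
    rcases le_total j (2 * m + 1 - j) with hjj | hjj
    · rw [min_eq_left hjj, Lj_eq_LjShort hcop (by omega)]
    · rw [min_eq_right hjj, ← Lj_sub_eq_LjShort hcop (by omega), Nat.sub_sub_self (by omega)]
  rw [hfold, Lj_eq_LjShort hcop (by omega)]
  exact LjShort_le_of_le hd (by omega) (by omega)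
end

section
/- For p = 3 and any positive integer d not divisible by 3, the quantity L(d) := max_{1 ≤ j ≤ 2} Σ_{i=j}^{2} ( ⌊i·d/3⌋ - ⌊i·d/3 - (2/3)·(j·d/3)⌋ ) equals ⌈2d/3⌉ + ⌈d/3⌉ - ⌈d/9⌉ - ⌈4d/9⌉. -/
/-! Since `3 ∤ d`, none of `d/3, 2d/3, d/9, 4d/9` is an integer, so each ceiling on the right is
the corresponding floor plus one and the right-hand side is exactly the `j = 1` term. The `j = 2`
term is no larger by the inequality `⌊d/9⌋ + ⌊4d/9⌋ ≤ ⌊2d/9⌋ + ⌊d/3⌋`, checked on residues mod 9. -/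

lemma Finset.sup'_Icc_one_two {α : Type*} [SemilatticeSup α] (f : ℕ → α)
    (h : (Finset.Icc 1 2).Nonempty) : (Finset.Icc 1 2).sup' h f = f 1 ⊔ f 2 := by
  change ({1, 2} : Finset ℕ).sup' (Finset.insert_nonempty 1 {2}) f = _
  rw [Finset.sup'_insert (H := Finset.singleton_nonempty 2), Finset.sup'_singleton]

lemma Rat.ceil_natCast_div_natCast_eq_floor_add_one {n k : ℕ} (hk : 0 < k) (h : ¬ k ∣ n) :
    ⌈(n / k : ℚ)⌉ = ⌊(n / k : ℚ)⌋ + 1 := by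
  rw [Int.ceil_eq_floor_add_one_iff_notMem]
  rintro ⟨m, hm⟩
  rw [eq_div_iff (by positivity)] at hm
  exact h (Int.natCast_dvd_natCast.mp ⟨m, by rw [mul_comm]; exact_mod_cast hm.symm⟩)

lemma Rat.floor_eq_natCast_div_of_eq {x : ℚ} {n k : ℕ} (hx : x = n / k) : ⌊x⌋ = (n / k : ℕ) := by
  rw [hx, Rat.floor_natCast_div_natCast, Int.natCast_ediv]

lemma Rat.ceil_eq_natCast_div_add_one_of_eq {x : ℚ} {n k : ℕ} (hx : x = n / k) (hk : 0 < k)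
    (h : ¬ k ∣ n) : ⌈x⌉ = (n / k : ℕ) + 1 := by
  rw [hx, Rat.ceil_natCast_div_natCast_eq_floor_add_one hk h, Rat.floor_eq_natCast_div_of_eq rfl]

lemma Nat.div_nine_add_four_mul_div_nine_le (d : ℕ) : d / 9 + 4 * d / 9 ≤ 2 * d / 9 + d / 3 := by
  have hr := Nat.mod_lt d (show 9 > 0 by norm_num)
  interval_cases h : d % 9 <;> omega

theorem lowerbound_p3 (d : ℕ) (hpd : ¬ (3 ∣ d)) :
    (Finset.Icc (1:ℕ) 2).sup' (Finset.nonempty_Icc.mpr (by omega))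
      (fun (j : ℕ) => ∑ i ∈ Finset.Icc j 2,
        (⌊((i : ℚ) * d) / 3⌋ - ⌊((i : ℚ) * d) / 3 - (2 / 3) * ((j : ℚ) * d / 3)⌋)) =
    ⌈(2 * (d : ℚ)) / 3⌉ + ⌈(d : ℚ) / 3⌉ - ⌈(d : ℚ) / 9⌉ - ⌈(4 * (d : ℚ)) / 9⌉ := by
  rw [Finset.sup'_Icc_one_two]
  simp only [show Finset.Icc 1 2 = {1, 2} from rfl, show Finset.Icc 2 2 = {2} from rfl,
    Finset.sum_insert (show 1 ∉ ({2} : Finset ℕ) by decide), Finset.sum_singleton]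
  have h9 : ¬ 9 ∣ d := fun h => hpd ((by norm_num : 3 ∣ 9).trans h)
  rw [Rat.floor_eq_natCast_div_of_eq (n := d) (k := 3) (by push_cast; ring),
    Rat.floor_eq_natCast_div_of_eq (n := d) (k := 9) (by push_cast; ring),
    Rat.floor_eq_natCast_div_of_eq (n := 2 * d) (k := 3) (by push_cast; ring),
    Rat.floor_eq_natCast_div_of_eq (n := 4 * d) (k := 9) (by push_cast; ring),
    Rat.floor_eq_natCast_div_of_eq (n := 2 * d) (k := 9) (by push_cast; ring),
    Rat.ceil_eq_natCast_div_add_one_of_eq (n := 2 * d) (k := 3) (by push_cast; ring) (by norm_num)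
      (by omega),
    Rat.ceil_eq_natCast_div_add_one_of_eq (n := d) (k := 3) (by push_cast; ring) (by norm_num) hpd,
    Rat.ceil_eq_natCast_div_add_one_of_eq (n := d) (k := 9) (by push_cast; ring) (by norm_num) h9,
    Rat.ceil_eq_natCast_div_add_one_of_eq (n := 4 * d) (k := 9) (by push_cast; ring) (by norm_num)
      (by omega)]
  have hle := Nat.div_nine_add_four_mul_div_nine_le d
  rw [sup_eq_left.mpr (by omega)]
  ring
end

section
/- Let p be an odd prime, d a positive integer with p ∤ d, and j an integer with 1 ≤ j < p - j. With S₂ = Σ_{i=j}^{p-1} ⌊i·d/p - (1-1/p)·j·d/p⌋ and S₃ = Σ_{i=p-j}^{p-1} ⌊i·d/p - (1-1/p)·(p-j)·d/p⌋, one has S₂ - S₃ = j + (p-1)(d-1)/2 - j·d + ⌊j·d/p⌋. -/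
/-!
Write `j d = p A + r` with `0 < r < p`. Each summand of `S₂` is `⌊((i - j) d + A + r / p) / p⌋`,
i.e. the integer quotient `((i - j) d + A) / p`, and likewise for `S₃` with
`A' = ⌊(p - j) d / p⌋ = d - 1 - A`. Hence `S₂` is the sum of `(k d + A) / p` over `k < p - j`.
Over all `k < p` that sum equals `(p - 1)(d - 1) / 2 + A`, because the residues of `k d + A`
run through `0, …, p - 1`. The missing terms `k = p - j + m` pair off with the terms of `S₃`
at `j - 1 - m`: the two numerators add up to `p d - 1`, so the quotients add up to `d - 1`.
-/

open Finset

section FloorSums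

variable {p d : ℕ}

theorem floor_mul_div_sub_shift_eq {K : Type*} [Field K] [LinearOrder K] [IsStrictOrderedRing K]
    [FloorRing K] (hp : 0 < p) {c i : ℕ} (hci : c ≤ i) :
    ⌊((i : K) * d) / p - (1 - 1 / (p : K)) * ((c : K) * d) / p⌋ =
      (((i - c) * d + c * d / p) / p : ℕ) := by
  have hpK : (p : K) ≠ 0 := by exact_mod_cast hp.ne'
  have hcd : ((p * (c * d / p) + c * d % p : ℕ) : K) = c * d := by
    exact_mod_cast Nat.div_add_mod (c * d) p
  have hfract : ⌊((c * d % p : ℕ) : K) / p⌋ = 0 := by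
    rw [Int.floor_eq_zero_iff]
    exact ⟨by positivity, (div_lt_one (by positivity)).2 (by exact_mod_cast Nat.mod_lt _ hp)⟩
  have hsplit : ((i : K) * d) / p - (1 - 1 / (p : K)) * ((c : K) * d) / p =
      (((((i - c) * d + c * d / p : ℕ) : K) + ((c * d % p : ℕ) : K) / p) / p) := by
    push_cast [Nat.cast_sub hci] at hcd ⊢
    field_simp
    linear_combination -hcd
  rw [hsplit, Int.floor_div_natCast, Int.floor_natCast_add, hfract, add_zero]
  norm_cast

theorem sum_Icc_floor_mul_div_sub_shift_eq {K : Type*} [Field K] [LinearOrder K]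
    [IsStrictOrderedRing K] [FloorRing K] (hp : 0 < p) (c : ℕ) :
    ∑ i ∈ Icc c (p - 1), ⌊((i : K) * d) / p - (1 - 1 / (p : K)) * ((c : K) * d) / p⌋ =
      ((∑ k ∈ range (p - c), (k * d + c * d / p) / p : ℕ) : ℤ) := by
  rw [← Ico_add_one_right_eq_Icc, Nat.sub_add_cancel (show 1 ≤ p from hp), sum_Ico_eq_sum_range,
    Nat.cast_sum]
  refine sum_congr rfl fun k _ ↦ ?_
  rw [floor_mul_div_sub_shift_eq hp (Nat.le_add_right c k), Nat.add_sub_cancel_left]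

theorem sum_range_mul_add_mod (hpd : Nat.Coprime p d) (A : ℕ) :
    ∑ k ∈ range p, (k * d + A) % p = ∑ k ∈ range p, k := by
  have hinj : Set.InjOn (fun k ↦ (k * d + A) % p) (range p) := by
    intro a ha b hb hab
    have hmod : a * d ≡ b * d [MOD p] := Nat.ModEq.add_right_cancel' A hab
    exact (Nat.ModEq.cancel_right_of_coprime hpd hmod).eq_of_lt_of_lt
      (mem_range.1 ha) (mem_range.1 hb)
  have himage : (range p).image (fun k ↦ (k * d + A) % p) = range p := by
    refine eq_of_subset_of_card_le (fun x hx ↦ ?_) (card_image_of_injOn hinj).ge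
    obtain ⟨k, hk, rfl⟩ := mem_image.1 hx
    exact mem_range.2 (Nat.mod_lt _ (pos_of_ne_zero (by rintro rfl; simp at hk)))
  calc ∑ k ∈ range p, (k * d + A) % p = ∑ x ∈ (range p).image (fun k ↦ (k * d + A) % p), x :=
        (sum_image (f := fun x ↦ x) hinj).symm
    _ = ∑ k ∈ range p, k := by rw [himage]

theorem two_mul_sum_range_mul_add_div (hp : 0 < p) (hpd : Nat.Coprime p d) (A : ℕ) :
    2 * ((∑ k ∈ range p, (k * d + A) / p : ℕ) : ℤ) = ((p : ℤ) - 1) * ((d : ℤ) - 1) + 2 * A := by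
  set S := ∑ k ∈ range p, (k * d + A) / p with hS
  have hdiv : p * S + ∑ k ∈ range p, (k * d + A) % p = ∑ k ∈ range p, (k * d + A) := by
    rw [hS, mul_sum, ← sum_add_distrib]
    exact sum_congr rfl fun k _ ↦ Nat.div_add_mod _ _
  rw [sum_range_mul_add_mod hpd, sum_add_distrib, ← sum_mul, sum_const, card_range,
    smul_eq_mul] at hdiv
  have hgauss := sum_range_id_mul_two p
  zify [show 1 ≤ p from hp] at hdiv hgauss
  refine mul_left_cancel₀ (show (p : ℤ) ≠ 0 by exact_mod_cast hp.ne') ?_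
  linear_combination 2 * hdiv + ((d : ℤ) - 1) * hgauss

theorem div_add_div_add_one_of_add_add_one_eq_mul (hp : 0 < p) {a b : ℕ}
    (h : a + b + 1 = p * d) : a / p + b / p + 1 = d := by
  have ha := Nat.div_add_mod a p
  have hb := Nat.div_add_mod b p
  have ha' := Nat.mod_lt a hp
  have hb' := Nat.mod_lt b hp
  have hlo : p * (a / p + b / p) < p * d := by simp only [mul_add]; omega
  have hhi : p * d < p * (a / p + b / p + 2) := by
    simp only [mul_add]; omega
  have := Nat.lt_of_mul_lt_mul_left hlo
  have := Nat.lt_of_mul_lt_mul_left hhi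
  omega

theorem div_add_div_add_one_of_add_eq_mul (hp : 0 < p) {a b : ℕ}
    (h : a + b = p * d) (hpa : ¬ p ∣ a) : a / p + b / p + 1 = d := by
  obtain ⟨a, rfl⟩ : ∃ a', a = a' + 1 := Nat.exists_eq_add_one.2 (Nat.pos_of_ne_zero (by
    rintro rfl; exact hpa (dvd_zero p)))
  rw [Nat.succ_div, if_neg hpa, add_zero]
  exact div_add_div_add_one_of_add_add_one_eq_mul hp (by omega)

theorem sum_range_div_add_sum_range_div (hp : 0 < p) {n j A A' : ℕ} (hnj : n + j = p)
    (hA : A + A' + 1 = d) :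
    ∑ m ∈ range j, ((n + m) * d + A) / p + ∑ m ∈ range j, (m * d + A') / p + j = j * d := by
  -- pair the term at `m` of the first sum with the term at `j - 1 - m` of the second
  calc _ = ∑ m ∈ range j, (((n + m) * d + A) / p + ((j - 1 - m) * d + A') / p + 1) := by
        rw [sum_add_distrib, sum_add_distrib, sum_range_reflect (fun m ↦ (m * d + A') / p) j]
        simp
    _ = ∑ m ∈ range j, d := sum_congr rfl fun m hm ↦ by
        obtain ⟨t, rfl⟩ : ∃ t, j = m + 1 + t := ⟨j - (m + 1), by simp at hm; omega⟩
        refine div_add_div_add_one_of_add_add_one_eq_mul hp ?_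
        subst hnj hA
        rw [show m + 1 + t - 1 - m = t by omega]
        ring
    _ = j * d := by simp

end FloorSums

theorem S2_sub_S3_general (p d j : ℕ) (hp : p.Prime) (hpd : ¬ p ∣ d)
    (hj1 : 1 ≤ j) (hj2 : 2 * j < p) :
    (∑ i ∈ Finset.Icc j (p - 1),
        ⌊((i : ℚ) * d) / p - (1 - 1 / (p : ℚ)) * ((j : ℚ) * d) / p⌋) -
      (∑ i ∈ Finset.Icc (p - j) (p - 1),
        ⌊((i : ℚ) * d) / p - (1 - 1 / (p : ℚ)) * (((p - j : ℕ) : ℚ) * d) / p⌋) =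
    (j : ℤ) + ((p : ℤ) - 1) * ((d : ℤ) - 1) / 2 - (j : ℤ) * d + ⌊((j : ℚ) * d) / p⌋ := by
  have hjp : j < p := by omega
  have hpj : p - j + j = p := Nat.sub_add_cancel hjp.le
  have hpjd : ¬ p ∣ j * d := fun h ↦
    (hp.dvd_mul.1 h).elim (Nat.not_dvd_of_pos_of_lt hj1 hjp) hpd
  have hA : j * d / p + (p - j) * d / p + 1 = d :=
    div_add_div_add_one_of_add_eq_mul hp.pos (by rw [← add_mul, add_comm, hpj]) hpjd
  have hfloor : ⌊((j : ℚ) * d) / p⌋ = ((j * d / p : ℕ) : ℤ) := by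
    exact_mod_cast Rat.floor_natCast_div_natCast (j * d) p
  have hfull := two_mul_sum_range_mul_add_div hp.pos
    ((Nat.Prime.coprime_iff_not_dvd hp).2 hpd) (j * d / p)
  have hsplit := sum_range_add (fun k ↦ (k * d + j * d / p) / p) (p - j) j
  have htail := sum_range_div_add_sum_range_div hp.pos hpj hA
  rw [hpj] at hsplit
  rw [sum_Icc_floor_mul_div_sub_shift_eq hp.pos, sum_Icc_floor_mul_div_sub_shift_eq hp.pos,
    Nat.sub_sub_self hjp.le, hfloor]
  omega

theorem S2_sub_S3 (p d j : ℕ) (hp : p.Prime) (hodd : Odd p) (hd : 0 < d) (hpd : ¬ p ∣ d)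
    (hj1 : 1 ≤ j) (hj2 : 2 * j < p) :
    (∑ i ∈ Finset.Icc j (p - 1),
        ⌊((i : ℚ) * d) / p - (1 - 1 / (p : ℚ)) * ((j : ℚ) * d) / p⌋) -
      (∑ i ∈ Finset.Icc (p - j) (p - 1),
        ⌊((i : ℚ) * d) / p - (1 - 1 / (p : ℚ)) * (((p - j : ℕ) : ℚ) * d) / p⌋) =
    (j : ℤ) + ((p : ℤ) - 1) * ((d : ℤ) - 1) / 2 - (j : ℤ) * d + ⌊((j : ℚ) * d) / p⌋ :=
  S2_sub_S3_general p d j hp hpd hj1 hj2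
end

section
/- Let p be an odd prime, d a positive integer with p ∤ d, and j an integer with 1 ≤ j < p - j. Then Σ_{i=j}^{p-1-j} ⌊i·d/p⌋ = (d-1)(p-1-2j)/2 + ⌊j·d/p⌋. -/
/-!
For `0 < i < p` the number `i d / p` is not an integer, so the floors of `i d / p` and of
`(p - i) d / p = d - i d / p` add up to `d - 1`. The summation range `j + 1, …, p - 1 - j` is
symmetric under `i ↦ p - i`, so twice its sum is `(p - 1 - 2j)(d - 1)`; the term `i = j` is
left over.
-/

open Finset

lemma Int.floor_add_floor_intCast_sub {R : Type*} [Ring R] [LinearOrder R] [IsStrictOrderedRing R]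
    [FloorRing R] {a : R} (ha : a ∉ Set.range Int.cast) (n : ℤ) :
    ⌊a⌋ + ⌊(n : R) - a⌋ = n - 1 := by
  rw [sub_eq_neg_add, Int.floor_add_intCast, Int.floor_neg,
    (Int.ceil_eq_floor_add_one_iff_notMem a).mpr ha]
  ring

lemma Rat.intCast_div_notMem_range_intCast {a n : ℤ} (hn : n ≠ 0) (hna : ¬ n ∣ a) :
    (a / n : ℚ) ∉ Set.range Int.cast := by
  rintro ⟨z, hz⟩
  refine hna ⟨z, ?_⟩
  have hn' : (n : ℚ) ≠ 0 := by exact_mod_cast hn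
  rw [eq_div_iff hn'] at hz
  exact_mod_cast hz.symm.trans (mul_comm _ _)

lemma Nat.Prime.floor_mul_div_add_floor_sub_mul_div {p d i : ℕ} (hp : p.Prime) (hpd : ¬ p ∣ d)
    (hi : 0 < i) (hip : i < p) :
    ⌊(i * d / p : ℚ)⌋ + ⌊((p - i : ℕ) * d / p : ℚ)⌋ = d - 1 := by
  have hpid : ¬ p ∣ i * d := fun h =>
    (hp.dvd_mul.mp h).elim (fun h => (Nat.le_of_dvd hi h).not_gt hip) hpd
  have hfrac := Rat.intCast_div_notMem_range_intCast (a := (i * d : ℕ)) (n := p)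
    (by exact_mod_cast hp.ne_zero) (by exact_mod_cast hpid)
  have hreflect : ((p - i : ℕ) * d / p : ℚ) = (d : ℤ) - i * d / p := by
    have : (p : ℚ) ≠ 0 := by exact_mod_cast hp.ne_zero
    rw [Nat.cast_sub hip.le]
    field_simp
    push_cast
    ring
  push_cast at hfrac
  rw [hreflect, Int.floor_add_floor_intCast_sub hfrac]

lemma Finset.two_nsmul_sum_Icc_eq_card_nsmul {M : Type*} [AddCommMonoid M] {f : ℕ → M} {a b : ℕ}
    {c : M} (hf : ∀ i ∈ Icc a b, f i + f (a + b - i) = c) :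
    2 • ∑ i ∈ Icc a b, f i = #(Icc a b) • c := by
  have hreflect : ∑ i ∈ Icc a b, f (a + b - i) = ∑ i ∈ Icc a b, f i := by
    refine sum_nbij' (fun i => a + b - i) (fun i => a + b - i) ?_ ?_ ?_ ?_ ?_ <;>
      intro i hi <;> simp only [mem_Icc] at hi ⊢ <;> omega
  rw [two_nsmul, ← sum_const, ← sum_congr rfl hf, sum_add_distrib]
  nth_rw 2 [← hreflect]

theorem S1_formula_general (p d j : ℕ) (hp : p.Prime) (hpd : ¬ p ∣ d)
    (hj2 : 2 * j < p) :
    (∑ i ∈ Finset.Icc j (p - 1 - j), ⌊((i : ℚ) * d) / p⌋) =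
      ((d : ℤ) - 1) * ((p : ℤ) - 1 - 2 * j) / 2 + ⌊((j : ℚ) * d) / p⌋ := by
  have hpairs : ∀ i ∈ Icc (j + 1) (p - 1 - j),
      ⌊(i * d / p : ℚ)⌋ + ⌊(((j + 1 + (p - 1 - j) - i : ℕ) : ℚ) * d / p)⌋ = d - 1 := by
    intro i hi
    rw [mem_Icc] at hi
    rw [show j + 1 + (p - 1 - j) - i = p - i by omega]
    exact hp.floor_mul_div_add_floor_sub_mul_div hpd (by omega) (by omega)
  have htwice := two_nsmul_sum_Icc_eq_card_nsmul hpairs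
  have hcard : (#(Icc (j + 1) (p - 1 - j)) : ℤ) = p - 1 - 2 * j := by
    rw [Nat.card_Icc]
    omega
  rw [nsmul_eq_mul, nsmul_eq_mul, hcard, Nat.cast_ofNat] at htwice
  rw [← add_sum_Ioc_eq_sum_Icc (by omega), ← Icc_add_one_left_eq_Ioc, add_comm,
    mul_comm ((d : ℤ) - 1), ← htwice, Int.mul_ediv_cancel_left _ two_ne_zero]

theorem S1_formula (p d j : ℕ) (hp : p.Prime) (hodd : Odd p) (hd : 0 < d) (hpd : ¬ p ∣ d)
    (hj1 : 1 ≤ j) (hj2 : 2 * j < p) :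
    (∑ i ∈ Finset.Icc j (p - 1 - j), ⌊((i : ℚ) * d) / p⌋) =
      ((d : ℤ) - 1) * ((p : ℤ) - 1 - 2 * j) / 2 + ⌊((j : ℚ) * d) / p⌋ :=
  S1_formula_general p d j hp hpd hj2
end
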